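/- Let C and C' be partitions of Fin n into nonempty clusters such that C' refines C (every cluster of C' is contained in some cluster of C). If β̄ minimizes F_C and β̄' minimizes F_{C'}, then F_C(β̄) ≤ F_{C'}(β̄'). Moreover F_{C'}(β̄') ≤ E(β) for all β ∈ ℝ^m, so the optimal aggregated objective values are nondecreasing under declustering and never exceed the optimal value of the original LAD problem. -/
import Mathlib

open Finset

noncomputable section

/-- The cluster of index `k` for the cluster-assignment map `c`. -/
def cluster {n K : ℕ} (c : Fin n → Fin K) (k : Fin K) : Finset (Fin n) :=
  Finset.univ.filter fun i => c i = k

/-- The original least absolute deviation (LAD) objective. -/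
def ladE {n m : ℕ} (x : Fin n → Fin m → ℝ) (y : Fin n → ℝ) (β : Fin m → ℝ) : ℝ :=
  ∑ i, |y i - ∑ j, x i j * β j|

/-- The weighted aggregated LAD objective over the centroids of the clusters. -/
def ladF {n m K : ℕ} (x : Fin n → Fin m → ℝ) (y : Fin n → ℝ)
    (c : Fin n → Fin K) (β : Fin m → ℝ) : ℝ :=
  ∑ k, ((cluster c k).card : ℝ) *
    |(∑ i ∈ cluster c k, y i) / ((cluster c k).card : ℝ) -
      ∑ j, ((∑ i ∈ cluster c k, x i j) / ((cluster c k).card : ℝ)) * β j|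

lemma ladF_eq_abs_sum {n m K : ℕ} (x : Fin n → Fin m → ℝ) (y : Fin n → ℝ)
    (c : Fin n → Fin K) (hsurj : Function.Surjective c) (β : Fin m → ℝ) :
    ladF x y c β = ∑ k, |∑ i ∈ cluster c k, (y i - ∑ j, x i j * β j)| := by
  unfold ladF
  refine Finset.sum_congr rfl fun k _ => ?_
  obtain ⟨i0, hi0⟩ := hsurj k
  have hk : (cluster c k).Nonempty := ⟨i0, by simp [cluster, hi0]⟩
  have hcard : (0:ℝ) < ((cluster c k).card : ℝ) := by
    exact_mod_cast Finset.card_pos.mpr hk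
  have hne : ((cluster c k).card : ℝ) ≠ 0 := ne_of_gt hcard
  have hS : ∑ i ∈ cluster c k, (y i - ∑ j, x i j * β j)
      = (∑ i ∈ cluster c k, y i) - ∑ j, (∑ i ∈ cluster c k, x i j) * β j := by
    rw [Finset.sum_sub_distrib, Finset.sum_comm]
    simp [Finset.sum_mul]
  have key : ((cluster c k).card : ℝ) *
      ((∑ i ∈ cluster c k, y i) / ((cluster c k).card : ℝ) -
        ∑ j, ((∑ i ∈ cluster c k, x i j) / ((cluster c k).card : ℝ)) * β j)
      = (∑ i ∈ cluster c k, y i) - ∑ j, (∑ i ∈ cluster c k, x i j) * β j := by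
    rw [mul_sub, mul_div_cancel₀ _ hne, Finset.mul_sum]
    congr 1
    refine Finset.sum_congr rfl fun j _ => ?_
    field_simp
  rw [hS, ← key, abs_mul, abs_of_pos hcard]

lemma ladF_le_ladE {n m K : ℕ} (x : Fin n → Fin m → ℝ) (y : Fin n → ℝ)
    (c : Fin n → Fin K) (hsurj : Function.Surjective c) (β : Fin m → ℝ) :
    ladF x y c β ≤ ladE x y β := by
  rw [ladF_eq_abs_sum x y c hsurj β]
  calc ∑ k, |∑ i ∈ cluster c k, (y i - ∑ j, x i j * β j)|
      ≤ ∑ k, ∑ i ∈ cluster c k, |y i - ∑ j, x i j * β j| :=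
        Finset.sum_le_sum fun k _ => Finset.abs_sum_le_sum_abs _ _
    _ = ladE x y β := by
        unfold ladE cluster
        exact Finset.sum_fiberwise _ _ _

lemma ladF_mono {n m K K' : ℕ} (x : Fin n → Fin m → ℝ) (y : Fin n → ℝ)
    (c : Fin n → Fin K) (hsurj : Function.Surjective c)
    (c' : Fin n → Fin K') (hsurj' : Function.Surjective c')
    (hrefine : ∀ i j : Fin n, c' i = c' j → c i = c j) (β : Fin m → ℝ) :
    ladF x y c β ≤ ladF x y c' β := by
  classical
  rw [ladF_eq_abs_sum x y c hsurj β, ladF_eq_abs_sum x y c' hsurj' β]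
  set r : Fin n → ℝ := fun i => y i - ∑ j, x i j * β j with hr
  obtain ⟨g, hg⟩ := hsurj'.hasRightInverse
  set f : Fin K' → Fin K := fun k' => c (g k') with hf
  have hfc : ∀ i : Fin n, f (c' i) = c i := fun i =>
    hrefine _ _ (hg (c' i))
  -- decompose each c-cluster into c'-fibers
  have hdecomp : ∀ k : Fin K, ∑ i ∈ cluster c k, r i
      = ∑ k', ∑ i ∈ (cluster c k).filter (fun i => c' i = k'), r i :=
    fun k => (Finset.sum_fiberwise _ _ _).symm
  have step1 : ∑ k, |∑ i ∈ cluster c k, r i|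
      ≤ ∑ k, ∑ k', |∑ i ∈ (cluster c k).filter (fun i => c' i = k'), r i| := by
    refine Finset.sum_le_sum fun k _ => ?_
    rw [hdecomp k]
    exact Finset.abs_sum_le_sum_abs _ _
  refine step1.trans (le_of_eq ?_)
  rw [Finset.sum_comm]
  refine Finset.sum_congr rfl fun k' _ => ?_
  -- for fixed k', only k = f k' contributes
  have hempty : ∀ k : Fin K, k ≠ f k' →
      (cluster c k).filter (fun i => c' i = k') = ∅ := by
    intro k hk
    rw [Finset.filter_eq_empty_iff]
    intro i hi hci'
    simp only [cluster, Finset.mem_filter] at hi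
    exact hk (hi.2 ▸ (hfc i ▸ congrArg f hci').symm ▸ rfl)
  have hfull : (cluster c (f k')).filter (fun i => c' i = k') = cluster c' k' := by
    ext i
    simp only [cluster, Finset.mem_filter, Finset.mem_univ, true_and]
    constructor
    · rintro ⟨-, h⟩; exact h
    · intro h; exact ⟨by rw [← hfc i, h], h⟩
  rw [Finset.sum_eq_single (f k')]
  · rw [hfull]
  · intro k _ hk
    rw [hempty k hk, Finset.sum_empty, abs_zero]
  · intro h; exact absurd (Finset.mem_univ _) h

/-- If the partition given by `c'` refines the partition given by `c`, and
`β̄`, `β̄'` minimize the respective aggregated LAD objectives, then the optimal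
aggregated objective values are nondecreasing under this refinement, and
never exceed the original LAD objective. -/
theorem lad_refinement_monotone (n m K K' : ℕ)
    (x : Fin n → Fin m → ℝ) (y : Fin n → ℝ)
    (c : Fin n → Fin K) (hsurj : Function.Surjective c)
    (c' : Fin n → Fin K') (hsurj' : Function.Surjective c')
    (hrefine : ∀ i j : Fin n, c' i = c' j → c i = c j)
    (βbar βbar' : Fin m → ℝ)
    (hmin : ∀ β : Fin m → ℝ, ladF x y c βbar ≤ ladF x y c β)
    (hmin' : ∀ β : Fin m → ℝ, ladF x y c' βbar' ≤ ladF x y c' β) :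
    ladF x y c βbar ≤ ladF x y c' βbar' ∧
      ∀ β : Fin m → ℝ, ladF x y c' βbar' ≤ ladE x y β := by
  constructor
  · exact (hmin βbar').trans (ladF_mono x y c hsurj c' hsurj' hrefine βbar')
  · intro β
    exact (hmin' β).trans (ladF_le_ladE x y c' hsurj' β)

end
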